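/- arXiv:2202.04739 — 2 statements merged into one kernel-verified Lean document; each statement's English description precedes it below -/
import Mathlib

section
/- The generalised quasi-shuffle product ⋆ on ℚ⟨Z⟩, defined recursively by w⋆1 = 1⋆w = w and (au)⋆(bv) = a(u⋆(bv)) + b((au)⋆v) − L_{a◊b}(u⋆v), is associative. -/
/-! Extend prepending and `L` bilinearly to "letters" `e ∈ ℚZ`, writing `e·p` and `L_e p`; this is
forced because `L_{a◊b}` produces linear combinations of letters. Then `L_e (f·p) = (e◊f)·p` and
`L_e ∘ L_f = L_{e◊f}`, and the defining recursion holds for every product `(e·p) ⋆ (f·q)`, which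
yields analogous recursions when one factor is `L_e p`. With these, both `((e·p) ⋆ (f·q)) ⋆ (g·r)`
and `(e·p) ⋆ ((f·q) ⋆ (g·r))` expand into seven terms that agree term by term once shorter
products are reassociated and `(e◊f)◊g = e◊(f◊g)`; induction on the total length proves
associativity on words, and bilinearity extends it to ℚ⟨Z⟩. -/

/-- Noncommutative polynomials ℚ⟨Z⟩, as finitely supported functions on words. -/
abbrev QW (Z : Type*) := List Z →₀ ℚ

/-- Prepend a letter to every word of a polynomial: `a·p`. -/
noncomputable def pre {Z : Type*} (a : Z) (p : QW Z) : QW Z :=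
  Finsupp.mapDomain (a :: ·) p

/-- `Lw D c w` is `L_c(w)`: for `w = x t`, it is `(c ◊ x) t`, and `L_c(1) = 0`. -/
noncomputable def Lw {Z : Type*} (D : (Z →₀ ℚ) →ₗ[ℚ] (Z →₀ ℚ) →ₗ[ℚ] (Z →₀ ℚ))
    (c : Z →₀ ℚ) : List Z → QW Z
  | [] => 0
  | x :: t => (D c (Finsupp.single x 1)).sum fun b r => Finsupp.single (b :: t) r

/-- Linear extension of `L_c` to ℚ⟨Z⟩. -/
noncomputable def Lmap {Z : Type*} (D : (Z →₀ ℚ) →ₗ[ℚ] (Z →₀ ℚ) →ₗ[ℚ] (Z →₀ ℚ))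
    (c : Z →₀ ℚ) (p : QW Z) : QW Z :=
  p.sum fun w r => r • Lw D c w

/-- The generalised quasi-shuffle product of two words:
`(au) ⋆ (bv) = a(u ⋆ bv) + b(au ⋆ v) − L_{a◊b}(u ⋆ v)`. -/
noncomputable def star {Z : Type*} (D : (Z →₀ ℚ) →ₗ[ℚ] (Z →₀ ℚ) →ₗ[ℚ] (Z →₀ ℚ)) :
    List Z → List Z → QW Z
  | [], v => Finsupp.single v 1
  | u, [] => Finsupp.single u 1
  | a :: u, b :: v =>
      pre a (star D u (b :: v)) + pre b (star D (a :: u) v)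
        - Lmap D (D (Finsupp.single a 1) (Finsupp.single b 1)) (star D u v)
  termination_by u v => u.length + v.length

/-- Bilinear extension of `star` to ℚ⟨Z⟩. -/
noncomputable def starP {Z : Type*} (D : (Z →₀ ℚ) →ₗ[ℚ] (Z →₀ ℚ) →ₗ[ℚ] (Z →₀ ℚ))
    (p q : QW Z) : QW Z :=
  p.sum fun u r => q.sum fun v s => (r * s) • star D u v

open Finsupp (single)

theorem Finsupp.induction_single_one {α R : Type*} [Semiring R] {motive : (α →₀ R) → Prop}
    (p : α →₀ R) (zero : motive 0) (add : ∀ p q, motive p → motive q → motive (p + q))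
    (smul : ∀ (r : R) p, motive p → motive (r • p)) (single : ∀ a, motive (single a 1)) :
    motive p := by
  induction p using Finsupp.induction_linear with
  | zero => exact zero
  | add p q hp hq => exact add p q hp hq
  | single a r => simpa only [Finsupp.smul_single_one] using smul r _ (single a)

namespace QuasiShuffle

variable {Z : Type*} (D : (Z →₀ ℚ) →ₗ[ℚ] (Z →₀ ℚ) →ₗ[ℚ] (Z →₀ ℚ))

noncomputable def lpre : (Z →₀ ℚ) →ₗ[ℚ] QW Z →ₗ[ℚ] QW Z :=
  Finsupp.lsum ℚ fun a => LinearMap.toSpanSingleton ℚ _ (Finsupp.lmapDomain ℚ ℚ (a :: ·))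

theorem lpre_single_apply (a : Z) (p : QW Z) : lpre (single a 1) p = pre a p := by
  simp [lpre, pre]

theorem single_cons (a : Z) (t : List Z) :
    (single (a :: t) 1 : QW Z) = lpre (single a 1) (single t 1) := by
  simp [lpre_single_apply, pre]

noncomputable def lLword : List Z → (Z →₀ ℚ) →ₗ[ℚ] QW Z
  | [] => 0
  | x :: t => (Finsupp.lmapDomain ℚ ℚ (· :: t)).comp (D.flip (single x 1))

theorem lLword_apply (c : Z →₀ ℚ) : ∀ w : List Z, lLword D w c = Lw D c w
  | [] => rfl
  | _ :: _ => rfl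

noncomputable def lLmap : (Z →₀ ℚ) →ₗ[ℚ] QW Z →ₗ[ℚ] QW Z :=
  (Finsupp.lsum ℚ fun w => LinearMap.toSpanSingleton ℚ _ (lLword D w)).flip

theorem lLmap_apply (c : Z →₀ ℚ) (p : QW Z) : lLmap D c p = Lmap D c p := by
  simp [lLmap, Lmap, LinearMap.finsupp_sum_apply, lLword_apply]

noncomputable def lstar : QW Z →ₗ[ℚ] QW Z →ₗ[ℚ] QW Z :=
  Finsupp.lsum ℚ fun u => LinearMap.toSpanSingleton ℚ _
    (Finsupp.lsum ℚ fun v => LinearMap.toSpanSingleton ℚ _ (star D u v))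

theorem lstar_apply (p q : QW Z) : lstar D p q = starP D p q := by
  simp [lstar, starP, LinearMap.finsupp_sum_apply, Finsupp.smul_sum, mul_smul]

theorem lstar_single_single (u v : List Z) :
    lstar D (single u 1) (single v 1) = star D u v := by
  simp [lstar]

theorem lstar_nil_left (p : QW Z) : lstar D (single [] 1) p = p := by
  induction p using Finsupp.induction_single_one with
  | zero => simp
  | add p q hp hq => rw [map_add, hp, hq]
  | smul r p hp => rw [map_smul, hp]
  | single v => rw [lstar_single_single, star.eq_1]

theorem lstar_nil_right (p : QW Z) : lstar D p (single [] 1) = p := by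
  induction p using Finsupp.induction_single_one with
  | zero => simp
  | add p q hp hq => rw [map_add, LinearMap.add_apply, hp, hq]
  | smul r p hp => rw [map_smul, LinearMap.smul_apply, hp]
  | single u => cases u <;> rw [lstar_single_single, star.eq_def]

theorem lstar_cons_cons (a b : Z) (u v : List Z) :
    lstar D (lpre (single a 1) (single u 1)) (lpre (single b 1) (single v 1)) =
      lpre (single a 1) (lstar D (single u 1) (lpre (single b 1) (single v 1)))
        + lpre (single b 1) (lstar D (lpre (single a 1) (single u 1)) (single v 1))
        - lLmap D (D (single a 1) (single b 1)) (lstar D (single u 1) (single v 1)) := by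
  rw [← single_cons a u, ← single_cons b v]
  simp only [lstar_single_single, lpre_single_apply, lLmap_apply]
  exact star.eq_3 D a u b v

theorem lLmap_nil (e : Z →₀ ℚ) : lLmap D e (single [] 1) = 0 := by
  simp [lLmap_apply, Lmap, Lw]

theorem lLmap_cons (e : Z →₀ ℚ) (x : Z) (t : List Z) :
    lLmap D e (single (x :: t) 1) = lpre (D e (single x 1)) (single t 1) := by
  simp [lLmap_apply, Lmap, Lw, lpre, Finsupp.sum, Finsupp.mapDomain_single]

theorem lLmap_lpre (e f : Z →₀ ℚ) (p : QW Z) : lLmap D e (lpre f p) = lpre (D e f) p := by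
  induction f using Finsupp.induction_single_one with
  | zero => simp
  | add f g hf hg => simp only [map_add, LinearMap.add_apply, hf, hg]
  | smul r f hf => simp only [map_smul, LinearMap.smul_apply, hf]
  | single x =>
    induction p using Finsupp.induction_single_one with
    | zero => simp
    | add p q hp hq => simp only [map_add, hp, hq]
    | smul r p hp => simp only [map_smul, hp]
    | single t => rw [← single_cons, lLmap_cons]

theorem lLmap_lLmap (hassoc : ∀ x y z, D (D x y) z = D x (D y z)) (e c : Z →₀ ℚ) (p : QW Z) :
    lLmap D e (lLmap D c p) = lLmap D (D e c) p := by
  induction p using Finsupp.induction_single_one with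
  | zero => simp
  | add p q hp hq => simp only [map_add, hp, hq]
  | smul r p hp => simp only [map_smul, hp]
  | single w =>
    cases w with
    | nil => simp only [lLmap_nil, map_zero]
    | cons x t => rw [lLmap_cons, lLmap_cons, lLmap_lpre, hassoc]

theorem lstar_lpre_lpre (e f : Z →₀ ℚ) (p q : QW Z) :
    lstar D (lpre e p) (lpre f q) =
      lpre e (lstar D p (lpre f q)) + lpre f (lstar D (lpre e p) q)
        - lLmap D (D e f) (lstar D p q) := by
  induction e using Finsupp.induction_single_one with
  | zero => simp
  | add e e' he he' => simp only [map_add, LinearMap.add_apply, he, he']; abel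
  | smul r e he => simp only [map_smul, LinearMap.smul_apply, he]; module
  | single a =>
  induction f using Finsupp.induction_single_one with
  | zero => simp
  | add f f' hf hf' => simp only [map_add, LinearMap.add_apply, hf, hf']; abel
  | smul r f hf => simp only [map_smul, LinearMap.smul_apply, hf]; module
  | single b =>
  induction p using Finsupp.induction_single_one with
  | zero => simp
  | add p p' hp hp' => simp only [map_add, LinearMap.add_apply, hp, hp']; abel
  | smul r p hp => simp only [map_smul, LinearMap.smul_apply, hp]; module
  | single u =>
  induction q using Finsupp.induction_single_one with
  | zero => simp
  | add q q' hq hq' => simp only [map_add, hq, hq']; abel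
  | smul r q hq => simp only [map_smul, hq]; module
  | single v => exact lstar_cons_cons D a b u v

theorem lstar_lLmap_lpre (hassoc : ∀ x y z, D (D x y) z = D x (D y z))
    (e f : Z →₀ ℚ) (p q : QW Z) :
    lstar D (lLmap D e p) (lpre f q) =
      lLmap D e (lstar D p (lpre f q)) + lpre f (lstar D (lLmap D e p) q)
        - lpre (D e f) (lstar D p q) := by
  induction p using Finsupp.induction_single_one with
  | zero => simp
  | add p p' hp hp' => simp only [map_add, LinearMap.add_apply, hp, hp']; abel
  | smul r p hp => simp only [map_smul, LinearMap.smul_apply, hp]; module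
  | single w =>
    cases w with
    | nil => simp [lLmap_nil, lstar_nil_left, lLmap_lpre]
    | cons x t =>
      rw [lLmap_cons, single_cons x t, lstar_lpre_lpre, lstar_lpre_lpre]
      simp only [map_add, map_sub, lLmap_lpre, lLmap_lLmap D hassoc, hassoc]
      abel

theorem lstar_lpre_lLmap (hcomm : ∀ x y, D x y = D y x)
    (hassoc : ∀ x y z, D (D x y) z = D x (D y z)) (e f : Z →₀ ℚ) (p q : QW Z) :
    lstar D (lpre e p) (lLmap D f q) =
      lpre e (lstar D p (lLmap D f q)) + lLmap D f (lstar D (lpre e p) q)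
        - lpre (D e f) (lstar D p q) := by
  induction q using Finsupp.induction_single_one with
  | zero => simp
  | add q q' hq hq' => simp only [map_add, hq, hq']; abel
  | smul r q hq => simp only [map_smul, hq]; module
  | single w =>
    cases w with
    | nil => simp [lLmap_nil, lstar_nil_right, lLmap_lpre, hcomm f e]
    | cons y s =>
      rw [lLmap_cons, single_cons y s, lstar_lpre_lpre, lstar_lpre_lpre]
      simp only [map_add, map_sub, lLmap_lpre, lLmap_lLmap D hassoc, ← hassoc, hcomm f e]
      abel

theorem lstar_lstar_lpre (hassoc : ∀ x y z, D (D x y) z = D x (D y z))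
    (e f g : Z →₀ ℚ) (p q r : QW Z) :
    lstar D (lstar D (lpre e p) (lpre f q)) (lpre g r) =
      lpre e (lstar D (lstar D p (lpre f q)) (lpre g r))
        + lpre f (lstar D (lstar D (lpre e p) q) (lpre g r))
        - lLmap D (D e f) (lstar D (lstar D p q) (lpre g r))
        + lpre g (lstar D (lstar D (lpre e p) (lpre f q)) r)
        - lLmap D (D e g) (lstar D (lstar D p (lpre f q)) r)
        - lLmap D (D f g) (lstar D (lstar D (lpre e p) q) r)
        + lpre (D (D e f) g) (lstar D (lstar D p q) r) := by
  rw [lstar_lpre_lpre D e f]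
  simp only [map_add, map_sub, LinearMap.add_apply, LinearMap.sub_apply]
  rw [lstar_lpre_lpre, lstar_lpre_lpre, lstar_lLmap_lpre D hassoc]
  abel

theorem lstar_lpre_lstar (hcomm : ∀ x y, D x y = D y x)
    (hassoc : ∀ x y z, D (D x y) z = D x (D y z)) (e f g : Z →₀ ℚ) (p q r : QW Z) :
    lstar D (lpre e p) (lstar D (lpre f q) (lpre g r)) =
      lpre e (lstar D p (lstar D (lpre f q) (lpre g r)))
        + lpre f (lstar D (lpre e p) (lstar D q (lpre g r)))
        - lLmap D (D e f) (lstar D p (lstar D q (lpre g r)))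
        + lpre g (lstar D (lpre e p) (lstar D (lpre f q) r))
        - lLmap D (D e g) (lstar D p (lstar D (lpre f q) r))
        - lLmap D (D f g) (lstar D (lpre e p) (lstar D q r))
        + lpre (D e (D f g)) (lstar D p (lstar D q r)) := by
  rw [lstar_lpre_lpre D f g]
  simp only [map_add, map_sub]
  rw [lstar_lpre_lpre, lstar_lpre_lpre, lstar_lpre_lLmap D hcomm hassoc]
  abel

theorem lstar_assoc_single (hcomm : ∀ x y, D x y = D y x)
    (hassoc : ∀ x y z, D (D x y) z = D x (D y z)) : ∀ u v w : List Z,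
    lstar D (lstar D (single u 1) (single v 1)) (single w 1) =
      lstar D (single u 1) (lstar D (single v 1) (single w 1))
  | [], v, w => by rw [lstar_nil_left, lstar_nil_left]
  | a :: u, [], w => by rw [lstar_nil_right, lstar_nil_left]
  | a :: u, b :: v, [] => by rw [lstar_nil_right, lstar_nil_right]
  | a :: u, b :: v, c :: w => by
    have ih₁ := lstar_assoc_single hcomm hassoc u (b :: v) (c :: w)
    have ih₂ := lstar_assoc_single hcomm hassoc (a :: u) v (c :: w)
    have ih₃ := lstar_assoc_single hcomm hassoc (a :: u) (b :: v) w
    have ih₄ := lstar_assoc_single hcomm hassoc u v (c :: w)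
    have ih₅ := lstar_assoc_single hcomm hassoc u (b :: v) w
    have ih₆ := lstar_assoc_single hcomm hassoc (a :: u) v w
    have ih₇ := lstar_assoc_single hcomm hassoc u v w
    simp only [single_cons] at *
    rw [lstar_lstar_lpre D hassoc, lstar_lpre_lstar D hcomm hassoc,
      ih₁, ih₂, ih₃, ih₄, ih₅, ih₆, ih₇, hassoc]
termination_by u v w => u.length + v.length + w.length

theorem lstar_assoc (hcomm : ∀ x y, D x y = D y x)
    (hassoc : ∀ x y z, D (D x y) z = D x (D y z)) (p q r : QW Z) :
    lstar D (lstar D p q) r = lstar D p (lstar D q r) := by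
  induction p using Finsupp.induction_single_one with
  | zero => simp
  | add p p' hp hp' => simp only [map_add, LinearMap.add_apply, hp, hp']
  | smul s p hp => simp only [map_smul, LinearMap.smul_apply, hp]
  | single u =>
  induction q using Finsupp.induction_single_one with
  | zero => simp
  | add q q' hq hq' => simp only [map_add, LinearMap.add_apply, hq, hq']
  | smul s q hq => simp only [map_smul, LinearMap.smul_apply, hq]
  | single v =>
  induction r using Finsupp.induction_single_one with
  | zero => simp
  | add r r' hr hr' => simp only [map_add, hr, hr']
  | smul s r hr => simp only [map_smul, hr]
  | single w => exact lstar_assoc_single D hcomm hassoc u v w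

end QuasiShuffle

/-- the generalised quasi-shuffle product is associative. -/
theorem generalised_quasi_shuffle_assoc {Z : Type*}
    (D : (Z →₀ ℚ) →ₗ[ℚ] (Z →₀ ℚ) →ₗ[ℚ] (Z →₀ ℚ))
    (hcomm : ∀ x y, D x y = D y x)
    (hassoc : ∀ x y z, D (D x y) z = D x (D y z)) :
    ∀ p q r : QW Z, starP D (starP D p q) r = starP D p (starP D q r) := by
  intro p q r
  simp only [← QuasiShuffle.lstar_apply]
  exact QuasiShuffle.lstar_assoc D hcomm hassoc p q r
end

section
/- The map S defined on words by S(z_{i₁}⋯z_{i_r}) = (−1)^r z_{i_r}⋯z_{i₁} is an antipode for the bialgebra (ℚ⟨Z⟩, ⋆, Δ_decon): for every nonempty word w = z_{i₁}⋯z_{i_r}, ∑_{k=0}^{r} S(z_{i₁}⋯z_{i_k}) ⋆ z_{i_{k+1}}⋯z_{i_r} = 0. -/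
/-!
Write `w = w₁ ⋯ w_r`. Expanding the `k`-th product `S(w₁ ⋯ w_k) ⋆ w_{k+1} ⋯ w_r` by the defining
recursion at its first letters `w_k` and `w_{k+1}` gives two prefixed terms and a correction
`L_{w_k ◊ w_{k+1}}(⋯)`. With the alternating signs, the prefixed terms of neighbouring indices
cancel, and what survives is the same alternating sum with the window `w_k w_{k+1}` collapsed into
`L_{w_k} ∘ L_{w_{k+1}}`. The same expansion widens a window of `g` letters to `g + 2`: since `◊` is
commutative and associative, the prefixed terms of neighbouring indices both prefix the
`◊`-product of the same `g + 1` letters, so they still cancel. Once the window covers the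
whole word the sum is `L_{w₁} ∘ ⋯ ∘ L_{w_r}(1) = 0`, and beyond that it is empty.
-/

theorem sum_range_alternating_telescope {R M : Type*} [Ring R] [AddCommGroup M] [Module R M]
    (T E F : ℕ → M) (n : ℕ) (h₀ : T 0 = E 0) (hlast : T (n + 1) = E n)
    (hmid : ∀ j < n, T (j + 1) = E j + E (j + 1) - F j) :
    ∑ i ∈ Finset.range (n + 2), (-1 : R) ^ i • T i
      = ∑ i ∈ Finset.range n, (-1 : R) ^ i • F i := by
  have hpartial : ∀ k ≤ n, ∑ i ∈ Finset.range (k + 1), (-1 : R) ^ i • T i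
      = ∑ i ∈ Finset.range k, (-1 : R) ^ i • F i + (-1 : R) ^ k • E k := by
    intro k hk
    induction k with
    | zero => simp [h₀]
    | succ k ih =>
      rw [Finset.sum_range_succ, ih (by omega), hmid k (by omega), Finset.sum_range_succ,
        pow_succ]
      simp only [mul_neg_one, neg_smul, smul_sub, smul_add]
      abel
  rw [Finset.sum_range_succ, hpartial n le_rfl, hlast, pow_succ]
  simp

theorem List.reverse_take_succ {α : Type*} (l : List α) (j : ℕ) (h : j < l.length) :
    (l.take (j + 1)).reverse = l[j] :: (l.take j).reverse := by
  rw [← List.take_append_getElem h, List.reverse_append]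
  rfl

theorem List.take_succ_drop_eq_cons {α : Type*} (l : List α) (j g : ℕ) (h : j < l.length) :
    (l.drop j).take (g + 1) = l[j] :: (l.drop (j + 1)).take g := by
  rw [List.drop_eq_getElem_cons h, List.take_succ_cons]

namespace QuasiShuffle

open Finsupp

variable {Z : Type*}

noncomputable def preₗ (a : Z) : QW Z →ₗ[ℚ] QW Z :=
  lmapDomain ℚ ℚ (a :: ·)

/-- `preComb m p = ∑ₐ m(a) · a p`: prepending a linear combination of letters. -/
noncomputable def preComb (m : Z →₀ ℚ) : QW Z →ₗ[ℚ] QW Z :=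
  linearCombination ℚ preₗ m

theorem preₗ_single (a : Z) (t : List Z) (r : ℚ) :
    preₗ a (single t r) = single (a :: t) r := by
  simp [preₗ, mapDomain_single]

theorem preComb_single_one (a : Z) : preComb (single a (1 : ℚ)) = preₗ a := by
  simp [preComb]

variable (D : (Z →₀ ℚ) →ₗ[ℚ] (Z →₀ ℚ) →ₗ[ℚ] (Z →₀ ℚ))

theorem star_nil_left (v : List Z) : star D [] v = single v 1 := by
  cases v <;> rw [_root_.star]

theorem star_nil_right (u : List Z) : star D u [] = single u 1 := by
  cases u <;> simp [_root_.star]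

noncomputable def Lmapₗ (c : Z →₀ ℚ) : QW Z →ₗ[ℚ] QW Z :=
  linearCombination ℚ (Lw D c)

theorem Lmapₗ_single (c : Z →₀ ℚ) (w : List Z) (r : ℚ) :
    Lmapₗ D c (single w r) = r • Lw D c w := by
  simp [Lmapₗ]

theorem star_cons_cons (a b : Z) (u v : List Z) :
    star D (a :: u) (b :: v) =
      preₗ a (star D u (b :: v)) + preₗ b (star D (a :: u) v)
        - Lmapₗ D (D (single a 1) (single b 1)) (star D u v) := by
  rw [_root_.star]; rfl

theorem Lw_cons (c : Z →₀ ℚ) (x : Z) (t : List Z) :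
    Lw D c (x :: t) = preComb (D c (single x 1)) (single t 1) := by
  simp [Lw, preComb, linearCombination_apply, LinearMap.finsupp_sum_apply, preₗ_single]

theorem Lmapₗ_comp_preₗ (c : Z →₀ ℚ) (a : Z) :
    Lmapₗ D c ∘ₗ preₗ a = preComb (D c (single a 1)) := by
  ext t : 2
  simp [Lmapₗ, preₗ_single, Lw_cons]

theorem Lmapₗ_comp_preComb (c m : Z →₀ ℚ) :
    Lmapₗ D c ∘ₗ preComb m = preComb (D c m) := by
  induction m using Finsupp.induction_linear with
  | zero => simp [preComb]
  | add f g hf hg =>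
    simp only [preComb, map_add, LinearMap.comp_add] at hf hg ⊢
    rw [hf, hg]
  | single b s =>
    rw [← smul_single_one, map_smul, preComb, map_smul, LinearMap.comp_smul, ← preComb,
      preComb_single_one, Lmapₗ_comp_preₗ, preComb, preComb, map_smul]

theorem Lmapₗ_comp_Lmapₗ (hassoc : ∀ x y z, D (D x y) z = D x (D y z)) (c e : Z →₀ ℚ) :
    Lmapₗ D c ∘ₗ Lmapₗ D e = Lmapₗ D (D c e) := by
  ext (_ | ⟨x, t⟩) : 2
  · simp [Lmapₗ, Lw]
  · simp only [LinearMap.comp_apply, lsingle_apply, Lmapₗ_single, one_smul, Lw_cons]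
    rw [← LinearMap.comp_apply (Lmapₗ D c), Lmapₗ_comp_preComb, hassoc]

/-- `Lword D [x₁, …, x_g] = L_{x₁} ∘ ⋯ ∘ L_{x_g}`. -/
noncomputable def Lword : List Z → QW Z →ₗ[ℚ] QW Z
  | [] => LinearMap.id
  | x :: s => Lmapₗ D (single x 1) ∘ₗ Lword s

noncomputable def mulLetters : List Z → (Z →₀ ℚ) → (Z →₀ ℚ)
  | [], m => m
  | x :: s, m => D (single x 1) (mulLetters s m)

/-- The `◊`-product of the letters of a word, with the junk value `0` for the empty word. -/
noncomputable def letterProd : List Z → (Z →₀ ℚ)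
  | [] => 0
  | x :: s => mulLetters D s (single x 1)

theorem Lword_append (s t : List Z) : Lword D (s ++ t) = Lword D s ∘ₗ Lword D t := by
  induction s with
  | nil => rfl
  | cons x s ih => simp only [List.cons_append, Lword, ih, LinearMap.comp_assoc]

theorem mulLetters_append (s t : List Z) (m : Z →₀ ℚ) :
    mulLetters D (s ++ t) m = mulLetters D s (mulLetters D t m) := by
  induction s with
  | nil => rfl
  | cons x s ih => rw [List.cons_append, mulLetters, ih, mulLetters]

theorem Lword_comp_preComb (s : List Z) (m : Z →₀ ℚ) :
    Lword D s ∘ₗ preComb m = preComb (mulLetters D s m) := by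
  induction s with
  | nil => rfl
  | cons x s ih => rw [Lword, LinearMap.comp_assoc, ih, Lmapₗ_comp_preComb, mulLetters]

theorem Lword_cons_apply_nil (x : Z) (s : List Z) :
    Lword D (x :: s) (single [] 1) = 0 := by
  induction s generalizing x with
  | nil => simp [Lword, Lmapₗ_single, Lw]
  | cons y s ih => rw [Lword, LinearMap.comp_apply, ih, map_zero]

theorem Lword_preₗ (s : List Z) (a : Z) (p : QW Z) :
    Lword D s (preₗ a p) = preComb (mulLetters D s (single a 1)) p := by
  rw [← preComb_single_one, ← LinearMap.comp_apply, Lword_comp_preComb]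

section Commutative

variable {D}
variable (hcomm : ∀ x y, D x y = D y x) (hassoc : ∀ x y z, D (D x y) z = D x (D y z))
include hcomm hassoc

theorem Lmapₗ_comp_Lword (c : Z →₀ ℚ) (s : List Z) :
    Lmapₗ D c ∘ₗ Lword D s = Lword D s ∘ₗ Lmapₗ D c := by
  induction s with
  | nil => rfl
  | cons x s ih =>
    rw [Lword, ← LinearMap.comp_assoc, Lmapₗ_comp_Lmapₗ D hassoc, hcomm,
      ← Lmapₗ_comp_Lmapₗ D hassoc, LinearMap.comp_assoc, ih, LinearMap.comp_assoc]

theorem Lword_comp_Lmapₗ_mul (s : List Z) (a b : Z) :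
    Lword D s ∘ₗ Lmapₗ D (D (single a 1) (single b 1)) = Lword D (a :: s ++ [b]) := by
  rw [← Lmapₗ_comp_Lmapₗ D hassoc, ← LinearMap.comp_assoc, ← Lmapₗ_comp_Lword hcomm hassoc,
    List.cons_append, Lword, Lword_append, Lword, Lword, LinearMap.comp_id, LinearMap.comp_assoc]

theorem mulLetters_mul (s : List Z) (x m : Z →₀ ℚ) :
    mulLetters D s (D x m) = D x (mulLetters D s m) := by
  induction s with
  | nil => rfl
  | cons y s ih => rw [mulLetters, mulLetters, ih, ← hassoc, hcomm _ x, hassoc]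

theorem mulLetters_single_eq_letterProd_concat (s : List Z) (b : Z) :
    mulLetters D s (single b 1) = letterProd D (s ++ [b]) := by
  cases s with
  | nil => rfl
  | cons x s =>
    rw [List.cons_append, letterProd, mulLetters_append, mulLetters, mulLetters, mulLetters,
      ← mulLetters_mul hcomm hassoc, hcomm]

theorem Lword_star_cons_cons (s : List Z) (a b : Z) (t v : List Z) :
    Lword D s (star D (a :: t) (b :: v)) =
      preComb (letterProd D (a :: s)) (star D t (b :: v))
        + preComb (letterProd D (s ++ [b])) (star D (a :: t) v)
        - Lword D (a :: s ++ [b]) (star D t v) := by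
  rw [star_cons_cons, map_sub, map_add, Lword_preₗ, Lword_preₗ,
    mulLetters_single_eq_letterProd_concat hcomm hassoc s b, ← LinearMap.comp_apply (Lword D s),
    Lword_comp_Lmapₗ_mul hcomm hassoc]
  rfl

theorem Lword_star_nil_cons (s : List Z) (b : Z) (v : List Z) :
    Lword D s (star D [] (b :: v)) = preComb (letterProd D (s ++ [b])) (star D [] v) := by
  rw [star_nil_left, star_nil_left, ← preₗ_single, Lword_preₗ,
    mulLetters_single_eq_letterProd_concat hcomm hassoc]

end Commutative

theorem Lword_star_cons_nil (s : List Z) (a : Z) (t : List Z) :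
    Lword D s (star D (a :: t) []) = preComb (letterProd D (a :: s)) (star D t []) := by
  rw [star_nil_right, star_nil_right, ← preₗ_single, Lword_preₗ]
  rfl

noncomputable def windowTerm (w : List Z) (g i : ℕ) : QW Z :=
  Lword D ((w.drop i).take g) (star D (w.take i).reverse (w.drop (i + g)))

noncomputable def edgeTerm (w : List Z) (g j : ℕ) : QW Z :=
  preComb (letterProd D ((w.drop j).take (g + 1)))
    (star D (w.take j).reverse (w.drop (j + g + 1)))

noncomputable def windowSum (w : List Z) (g : ℕ) : QW Z :=
  ∑ i ∈ Finset.range (w.length + 1 - g), (-1 : ℚ) ^ i • windowTerm D w g i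

theorem windowSum_zero (w : List Z) :
    windowSum D w 0 =
      ∑ k ∈ Finset.range (w.length + 1), (-1 : ℚ) ^ k • star D (w.take k).reverse (w.drop k) := by
  simp [windowSum, windowTerm, Lword]

theorem windowSum_of_length_lt (w : List Z) (g : ℕ) (h : w.length < g) : windowSum D w g = 0 := by
  simp [windowSum, Nat.sub_eq_zero_of_le h]

theorem windowSum_length (w : List Z) (hw : w ≠ []) : windowSum D w w.length = 0 := by
  obtain ⟨x, s, rfl⟩ := List.exists_cons_of_ne_nil hw
  simp [windowSum, windowTerm, star_nil_left, Lword_cons_apply_nil]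

theorem windowTerm_last (w : List Z) (g j : ℕ) (h : j + g + 1 = w.length) :
    windowTerm D w g (j + 1) = edgeTerm D w g j := by
  have hj : j < w.length := by omega
  have hdrop : w.drop (j + 1 + g) = [] := List.drop_eq_nil_of_le (by omega)
  rw [windowTerm, edgeTerm, List.reverse_take_succ w j hj, hdrop, Lword_star_cons_nil,
    List.take_succ_drop_eq_cons w j g hj, Nat.add_right_comm, hdrop]

section Commutative

variable {D}
variable (hcomm : ∀ x y, D x y = D y x) (hassoc : ∀ x y z, D (D x y) z = D x (D y z))
include hcomm hassoc

theorem windowTerm_first (w : List Z) (g : ℕ) (h : g < w.length) :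
    windowTerm D w g 0 = edgeTerm D w g 0 := by
  simp only [windowTerm, edgeTerm, List.drop_zero, List.take_zero, List.reverse_nil, zero_add]
  rw [List.drop_eq_getElem_cons h, Lword_star_nil_cons hcomm hassoc, ← List.take_append_getElem h]

theorem windowTerm_succ (w : List Z) (g j : ℕ) (h : j + g + 2 < w.length + 1) :
    windowTerm D w g (j + 1) =
      edgeTerm D w g j + edgeTerm D w g (j + 1) - windowTerm D w (g + 2) j := by
  have hj : j < w.length := by omega
  have hjg : j + 1 + g < w.length := by omega
  rw [windowTerm, List.reverse_take_succ w j hj, List.drop_eq_getElem_cons hjg,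
    Lword_star_cons_cons hcomm hassoc, edgeTerm, edgeTerm, windowTerm,
    List.take_succ_drop_eq_cons w j _ hj, List.take_succ_drop_eq_cons w j _ hj,
    List.take_succ_drop (by omega : g < w.length - (j + 1)), List.reverse_take_succ w j hj,
    Nat.add_right_comm j g, ← List.drop_eq_getElem_cons hjg, List.cons_append,
    show j + (g + 2) = j + 1 + g + 1 by omega]

theorem windowSum_add_two (w : List Z) (hw : w ≠ []) (g : ℕ) :
    windowSum D w g = windowSum D w (g + 2) := by
  rcases lt_trichotomy g w.length with hlt | rfl | hgt
  · obtain ⟨n, hn⟩ : ∃ n, n + g + 1 = w.length := ⟨w.length - g - 1, by omega⟩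
    rw [windowSum, windowSum, show w.length + 1 - g = n + 2 by omega,
      show w.length + 1 - (g + 2) = n by omega]
    exact sum_range_alternating_telescope _ _ _ n (windowTerm_first hcomm hassoc w g hlt)
      (windowTerm_last D w g n hn) fun j hj => windowTerm_succ hcomm hassoc w g j (by omega)
  · rw [windowSum_length D w hw, windowSum_of_length_lt D w _ (by omega)]
  · rw [windowSum_of_length_lt D w _ hgt, windowSum_of_length_lt D w _ (by omega)]

end Commutative

end QuasiShuffle

open QuasiShuffle

theorem antipode_convolution_vanishes {Z : Type*}
    (D : (Z →₀ ℚ) →ₗ[ℚ] (Z →₀ ℚ) →ₗ[ℚ] (Z →₀ ℚ))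
    (hcomm : ∀ x y, D x y = D y x)
    (hassoc : ∀ x y z, D (D x y) z = D x (D y z))
    (w : List Z) (hw : w ≠ []) :
    ∑ k ∈ Finset.range (w.length + 1),
      ((-1 : ℚ) ^ k) • star D ((w.take k).reverse) (w.drop k) = 0 := by
  have hshift : ∀ n, windowSum D w 0 = windowSum D w (2 * n) := by
    intro n
    induction n with
    | zero => rfl
    | succ n ih => rw [ih, mul_add, mul_one, windowSum_add_two hcomm hassoc w hw]
  rw [← windowSum_zero, hshift (w.length + 1), windowSum_of_length_lt D w _ (by omega)]
end
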